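/- arXiv:1101.5280 — 7 statements merged into one kernel-verified Lean document; each statement's English description precedes it below -/
import Mathlib

section
/- Let n ≥ 1 and let k : Fin n → Fin n → ℝ with k i j ≥ 0 for all i ≠ j (k i j is the rate constant of the transition A_j → A_i). There exists a vector p ∈ ℝ^n with p_i > 0 for all i satisfying the detailed balance conditions k i j * p_j = k j i * p_i for all i ≠ j, if and only if both of the following hold: (1) for all i ≠ j, k i j > 0 implies k j i > 0; and (2) for every finite sequence of indices i_1, …, i_q (with the cyclic convention i_{q+1} = i_1) such that k i_{j+1} i_j > 0 for all j = 1,…,q, one has ∏_{j=1}^q k i_{j+1} i_j = ∏_{j=1}^q k i_j i_{j+1}. -/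
/-!
Put an edge between `i ≠ j` when both rates `k i j`, `k j i` are positive. A positive `p` is in
detailed balance exactly when `log p` is a potential for `c i j = log k j i - log k i j`, the log
of the forward/backward rate ratio of `A_i → A_j`: `c i j = log p j - log p i` on edges, while
non-edges carry `k i j = k j i = 0` by reversibility. Taking logs, the Wegscheider identities say
that `c` sums to zero around every closed walk, so its sum along a walk depends only on the
endpoints, and summing from a fixed root in each connected component gives the potential.
Conversely, detailed balance telescopes around any cycle, the factors `p` cancelling.
-/

open Finset

namespace SimpleGraph.Walk

variable {V α : Type*} [AddCommGroup α] {G : SimpleGraph V} (c : V → V → α)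

def dartSum {u v : V} (w : G.Walk u v) : α := (w.darts.map fun d => c d.fst d.snd).sum

@[simp]
lemma dartSum_append {u v x : V} (w₁ : G.Walk u v) (w₂ : G.Walk v x) :
    (w₁.append w₂).dartSum c = w₁.dartSum c + w₂.dartSum c := by
  simp [dartSum]

@[simp]
lemma dartSum_concat {u v x : V} (w : G.Walk u v) (h : G.Adj v x) :
    (w.concat h).dartSum c = w.dartSum c + c v x := by
  simp [dartSum]

@[simp]
lemma dartSum_copy {u v u' v' : V} (w : G.Walk u v) (hu : u = u') (hv : v = v') :
    (w.copy hu hv).dartSum c = w.dartSum c := by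
  subst hu hv
  rfl

lemma dartSum_eq_sum_range_getVert {u v : V} (w : G.Walk u v) :
    w.dartSum c = ∑ j ∈ range w.length, c (w.getVert j) (w.getVert (j + 1)) := by
  induction w with
  | nil => rfl
  | cons h w ih =>
    simp only [length_cons, sum_range_succ', getVert_cons_succ, ← ih]
    simp [dartSum, add_comm]

lemma getVert_fin_add_one {u : V} (w : G.Walk u u) {q : ℕ} (hq : w.length = q + 1)
    (j : Fin (q + 1)) : w.getVert ↑(j + 1) = w.getVert (↑j + 1) := by
  rw [Fin.val_add_one]
  split_ifs with hj
  · simp [hj, ← hq]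
  · rfl

lemma dartSum_eq_of_forall_closed (hc : ∀ (u : V) (w : G.Walk u u), w.dartSum c = 0)
    {u v : V} (w₁ w₂ : G.Walk u v) : w₁.dartSum c = w₂.dartSum c := by
  have h₁ := hc u (w₁.append w₂.reverse)
  have h₂ := hc u (w₂.append w₂.reverse)
  rw [dartSum_append] at h₁ h₂
  exact add_right_cancel (h₁.trans h₂.symm)

lemma exists_potential_of_forall_closed (hc : ∀ (u : V) (w : G.Walk u u), w.dartSum c = 0) :
    ∃ φ : V → α, ∀ i j, G.Adj i j → c i j = φ j - φ i := by
  let root (v : V) : V := (G.connectedComponentMk v).out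
  have walk (v : V) : G.Walk (root v) v :=
    (ConnectedComponent.exact (G.connectedComponentMk v).out_eq).some
  refine ⟨fun v => (walk v).dartSum c, fun i j h => ?_⟩
  have hroot : root i = root j :=
    congrArg Quot.out (ConnectedComponent.connectedComponentMk_eq_of_adj h)
  have := dartSum_eq_of_forall_closed c hc ((walk i).concat h) ((walk j).copy hroot.symm rfl)
  rw [dartSum_concat, dartSum_copy] at this
  exact eq_sub_of_add_eq' this

end SimpleGraph.Walk

namespace LinearKinetics

open SimpleGraph.Walk

variable {V : Type*}

def IsDetailedBalanced (k : V → V → ℝ) (p : V → ℝ) : Prop :=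
  ∀ i j, i ≠ j → k i j * p j = k j i * p i

def IsReversible (k : V → V → ℝ) : Prop :=
  ∀ i j, i ≠ j → 0 < k i j → 0 < k j i

def SatisfiesWegscheider (k : V → V → ℝ) : Prop :=
  ∀ q : ℕ, ∀ idx : Fin (q + 1) → V, (∀ j, 0 < k (idx (j + 1)) (idx j)) →
    ∏ j, k (idx (j + 1)) (idx j) = ∏ j, k (idx j) (idx (j + 1))

def reversibleGraph (k : V → V → ℝ) : SimpleGraph V where
  Adj i j := i ≠ j ∧ 0 < k i j ∧ 0 < k j i
  symm := ⟨fun _ _ h => ⟨h.1.symm, h.2.2, h.2.1⟩⟩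
  loopless := ⟨fun _ h => h.1 rfl⟩

@[simp]
lemma reversibleGraph_adj {k : V → V → ℝ} {i j : V} :
    (reversibleGraph k).Adj i j ↔ i ≠ j ∧ 0 < k i j ∧ 0 < k j i :=
  Iff.rfl

noncomputable def logRatio (k : V → V → ℝ) (i j : V) : ℝ :=
  Real.log (k j i) - Real.log (k i j)

variable {k : V → V → ℝ} {p : V → ℝ}

lemma IsDetailedBalanced.isReversible (h : IsDetailedBalanced k p) (hp : ∀ i, 0 < p i) :
    IsReversible k := fun i j hij hkij =>
  (mul_pos_iff_of_pos_right (hp i)).mp (h i j hij ▸ mul_pos hkij (hp j))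

lemma IsDetailedBalanced.prod_perm_eq {ι : Type*} [Fintype ι] (h : IsDetailedBalanced k p)
    (hp : ∀ i, p i ≠ 0) (idx : ι → V) (σ : Equiv.Perm ι) :
    ∏ j, k (idx (σ j)) (idx j) = ∏ j, k (idx j) (idx (σ j)) := by
  have hstep (j : ι) :
      k (idx (σ j)) (idx j) * p (idx j) = k (idx j) (idx (σ j)) * p (idx (σ j)) := by
    by_cases he : idx (σ j) = idx j
    · rw [he]
    · exact h _ _ he
  have hprod := prod_congr rfl fun j (_ : j ∈ univ) => hstep j
  rw [prod_mul_distrib, prod_mul_distrib, Equiv.prod_comp σ fun j => p (idx j)] at hprod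
  exact mul_right_cancel₀ (prod_ne_zero_iff.mpr fun j _ => hp _) hprod

lemma IsDetailedBalanced.satisfiesWegscheider (h : IsDetailedBalanced k p) (hp : ∀ i, p i ≠ 0) :
    SatisfiesWegscheider k :=
  fun _ idx _ => h.prod_perm_eq hp idx (Equiv.addRight 1)

lemma SatisfiesWegscheider.dartSum_logRatio_eq_zero (hW : SatisfiesWegscheider k) {u : V}
    (w : (reversibleGraph k).Walk u u) : w.dartSum (logRatio k) = 0 := by
  rw [dartSum_eq_sum_range_getVert]
  cases hq : w.length with
  | zero => simp
  | succ q =>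
    set idx : Fin (q + 1) → V := fun j => w.getVert j
    have hpos (j : Fin (q + 1)) : 0 < k (idx j) (idx (j + 1)) ∧ 0 < k (idx (j + 1)) (idx j) := by
      simpa [idx, getVert_fin_add_one w hq] using
        (reversibleGraph_adj.mp (w.adj_getVert_succ (i := j) (by omega))).2
    rw [← Fin.sum_univ_eq_sum_range]
    simp only [← getVert_fin_add_one w hq, logRatio, sum_sub_distrib]
    rw [← Real.log_prod fun j _ => (hpos j).2.ne', ← Real.log_prod fun j _ => (hpos j).1.ne',
      hW q idx fun j => (hpos j).2, sub_self]

lemma exists_pos_isDetailedBalanced (hk : ∀ i j, i ≠ j → 0 ≤ k i j) (hrev : IsReversible k)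
    (hW : SatisfiesWegscheider k) :
    ∃ p : V → ℝ, (∀ i, 0 < p i) ∧ IsDetailedBalanced k p := by
  obtain ⟨φ, hφ⟩ := exists_potential_of_forall_closed (logRatio k)
    fun _ w => hW.dartSum_logRatio_eq_zero w
  refine ⟨fun i => Real.exp (φ i), fun i => Real.exp_pos _, fun i j hij => ?_⟩
  by_cases hpos : 0 < k i j
  · have hadj : (reversibleGraph k).Adj j i :=
      reversibleGraph_adj.mpr ⟨hij.symm, hrev i j hij hpos, hpos⟩
    have hlog := hφ j i hadj
    rw [logRatio] at hlog
    rw [← Real.exp_log hpos, ← Real.exp_log (reversibleGraph_adj.mp hadj).2.1, ← Real.exp_add,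
      ← Real.exp_add]
    congr 1
    linarith
  · have hij0 : k i j = 0 := le_antisymm (not_lt.mp hpos) (hk i j hij)
    have hji0 : k j i = 0 :=
      le_antisymm (not_lt.mp fun h => hpos (hrev j i hij.symm h)) (hk j i hij.symm)
    rw [hij0, hji0, zero_mul, zero_mul]

end LinearKinetics

theorem linear_detailed_balance_iff_wegscheider_general
    (n : ℕ) (k : Fin n → Fin n → ℝ)
    (hk : ∀ i j : Fin n, i ≠ j → 0 ≤ k i j) :
    (∃ p : Fin n → ℝ, (∀ i, 0 < p i) ∧
        ∀ i j : Fin n, i ≠ j → k i j * p j = k j i * p i) ↔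
      ((∀ i j : Fin n, i ≠ j → 0 < k i j → 0 < k j i) ∧
        (∀ q : ℕ, ∀ idx : Fin (q + 1) → Fin n,
          (∀ j : Fin (q + 1), 0 < k (idx (j + 1)) (idx j)) →
          ∏ j : Fin (q + 1), k (idx (j + 1)) (idx j)
            = ∏ j : Fin (q + 1), k (idx j) (idx (j + 1)))) := by
  constructor
  · rintro ⟨p, hp, hdb⟩
    exact ⟨LinearKinetics.IsDetailedBalanced.isReversible hdb hp,
      LinearKinetics.IsDetailedBalanced.satisfiesWegscheider hdb fun i => (hp i).ne'⟩
  · rintro ⟨hrev, hW⟩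
    exact LinearKinetics.exists_pos_isDetailedBalanced hk hrev hW

/-- Detailed balance for a linear (monomolecular) kinetic system:
a positive equilibrium with detailed balance exists iff the system is
reversible and every oriented cycle satisfies the Wegscheider identity. -/
theorem linear_detailed_balance_iff_wegscheider
    (n : ℕ) (hn : 1 ≤ n) (k : Fin n → Fin n → ℝ)
    (hk : ∀ i j : Fin n, i ≠ j → 0 ≤ k i j) :
    (∃ p : Fin n → ℝ, (∀ i, 0 < p i) ∧
        ∀ i j : Fin n, i ≠ j → k i j * p j = k j i * p i) ↔
      ((∀ i j : Fin n, i ≠ j → 0 < k i j → 0 < k j i) ∧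
        (∀ q : ℕ, ∀ idx : Fin (q + 1) → Fin n,
          (∀ j : Fin (q + 1), 0 < k (idx (j + 1)) (idx j)) →
          ∏ j : Fin (q + 1), k (idx (j + 1)) (idx j)
            = ∏ j : Fin (q + 1), k (idx j) (idx (j + 1)))) :=
  linear_detailed_balance_iff_wegscheider_general n k hk
end

section
/- Let γ_1, …, γ_m ∈ ℝ^n and let k_r⁺ > 0 and k_r⁻ ≥ 0 for r = 1,…,m. The following are equivalent: (A) all k_r⁻ > 0 and there exists x ∈ ℝ^n such that ∑_{i=1}^n γ_{r i} x_i = ln k_r⁺ − ln k_r⁻ for every r; (B) (1) k_r⁻ > 0 for all r (reversibility), and (2) for every λ ∈ ℝ^m with ∑_{r=1}^m λ_r γ_r = 0, the Wegscheider identity ∏_{r=1}^m (k_r⁺)^{λ_r} = ∏_{r=1}^m (k_r⁻)^{λ_r} holds (real powers). -/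
/-!
Taking logarithms turns the Wegscheider identity for `λ` into `λ ⬝ᵥ (ln k⁺ - ln k⁻) = 0`, so the
theorem is the Fredholm alternative for the matrix `Γ = (γ_{r i})`: the system `Γ x = b` is
solvable exactly when `b` is orthogonal to every `λ` with `λᵀ Γ = 0`.
-/

open Real Matrix

namespace Matrix

variable {K m n : Type*} [Field K] [Fintype m] [Fintype n] [DecidableEq m]

theorem exists_mulVec_eq_iff (A : Matrix m n K) (b : m → K) :
    (∃ x, A *ᵥ x = b) ↔ ∀ y, y ᵥ* A = 0 → y ⬝ᵥ b = 0 := by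
  have hann (y : m → K) :
      dotProductEquiv K m y ∈ (LinearMap.range A.mulVecLin).dualAnnihilator ↔ y ᵥ* A = 0 := by
    simp only [Submodule.mem_dualAnnihilator, LinearMap.mem_range, forall_exists_index,
      forall_apply_eq_imp_iff, mulVecLin_apply, dotProductEquiv_apply_apply, dotProduct_mulVec,
      dotProduct_eq_zero_iff]
  calc (∃ x, A *ᵥ x = b) ↔ b ∈ LinearMap.range A.mulVecLin := by
        simp only [LinearMap.mem_range, mulVecLin_apply]
    _ ↔ ∀ φ ∈ (LinearMap.range A.mulVecLin).dualAnnihilator, φ b = 0 :=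
        (Subspace.forall_mem_dualAnnihilator_apply_eq_zero_iff _ b).symm
    _ ↔ ∀ y, y ᵥ* A = 0 → y ⬝ᵥ b = 0 := by
        simp only [(dotProductEquiv K m).surjective.forall, hann, dotProductEquiv_apply_apply]

end Matrix

theorem Real.prod_rpow_of_pos {ι : Type*} (s : Finset ι) {a : ι → ℝ} (ha : ∀ i ∈ s, 0 < a i)
    (t : ι → ℝ) : ∏ i ∈ s, a i ^ t i = exp (∑ i ∈ s, t i * log (a i)) := by
  rw [exp_sum]
  exact Finset.prod_congr rfl fun i hi => by rw [rpow_def_of_pos (ha i hi), mul_comm]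

theorem Real.prod_rpow_eq_prod_rpow_iff {ι : Type*} [Fintype ι] {a c : ι → ℝ}
    (ha : ∀ i, 0 < a i) (hc : ∀ i, 0 < c i) (t : ι → ℝ) :
    ∏ i, a i ^ t i = ∏ i, c i ^ t i ↔ t ⬝ᵥ (fun i => log (a i) - log (c i)) = 0 := by
  rw [prod_rpow_of_pos _ (fun i _ => ha i), prod_rpow_of_pos _ (fun i _ => hc i), exp_eq_exp,
    ← sub_eq_zero, ← Finset.sum_sub_distrib]
  simp only [dotProduct, mul_sub]

theorem detailed_balance_iff_reversibility_and_wegscheider_general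
    (n m : ℕ) (γ : Fin m → Fin n → ℝ) (kp km : Fin m → ℝ)
    (hkp : ∀ r, 0 < kp r) :
    ((∀ r, 0 < km r) ∧ ∃ x : Fin n → ℝ,
        ∀ r, ∑ i, γ r i * x i = Real.log (kp r) - Real.log (km r)) ↔
      ((∀ r, 0 < km r) ∧ ∀ lam : Fin m → ℝ,
        (∀ i, ∑ r, lam r * γ r i = 0) →
        ∏ r, kp r ^ lam r = ∏ r, km r ^ lam r) := by
  refine and_congr_right fun hkm => ?_
  calc (∃ x : Fin n → ℝ, ∀ r, ∑ i, γ r i * x i = log (kp r) - log (km r))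
      ↔ ∃ x, of γ *ᵥ x = fun r => log (kp r) - log (km r) := by
        simp only [funext_iff, mulVec, dotProduct, of_apply]
    _ ↔ ∀ lam, lam ᵥ* of γ = 0 → lam ⬝ᵥ (fun r => log (kp r) - log (km r)) = 0 :=
        exists_mulVec_eq_iff _ _
    _ ↔ _ := forall_congr' fun lam => imp_congr
        (by simp only [funext_iff, vecMul, dotProduct, of_apply, Pi.zero_apply])
        (prod_rpow_eq_prod_rpow_iff hkp hkm lam).symm

/-- Classical criterion of detailed balance: existence of a positive
equilibrium (in logarithmic variables) is equivalent to reversibility plus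
the Wegscheider identities for all vectors `λ` with `∑ λ_r γ_r = 0`. -/
theorem detailed_balance_iff_reversibility_and_wegscheider
    (n m : ℕ) (γ : Fin m → Fin n → ℝ) (kp km : Fin m → ℝ)
    (hkp : ∀ r, 0 < kp r) (hkm : ∀ r, 0 ≤ km r) :
    ((∀ r, 0 < km r) ∧ ∃ x : Fin n → ℝ,
        ∀ r, ∑ i, γ r i * x i = Real.log (kp r) - Real.log (km r)) ↔
      ((∀ r, 0 < km r) ∧ ∀ lam : Fin m → ℝ,
        (∀ i, ∑ r, lam r * γ r i = 0) →
        ∏ r, kp r ^ lam r = ∏ r, km r ^ lam r) :=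
  detailed_balance_iff_reversibility_and_wegscheider_general n m γ kp km hkp
end

section
/- Let λ ∈ ℝ^m with λ_r ≥ 0 for all r. Let (k⁺_{r,j})_{j∈ℕ} and (k⁻_{r,j})_{j∈ℕ} be sequences of positive reals with k⁺_{r,j} → k_r^{lim+} and k⁻_{r,j} → k_r^{lim−} as j → ∞, such that for every j the Wegscheider identity ∏_{r=1}^m (k⁺_{r,j})^{λ_r} = ∏_{r=1}^m (k⁻_{r,j})^{λ_r} holds. Then: (1) if λ_s > 0 for some s with k_s^{lim+} = 0, then there is an index q with λ_q > 0 and k_q^{lim−} = 0; (2) if k_r^{lim+} > 0 and k_r^{lim−} > 0 for all r with λ_r > 0, then ∏_{r : λ_r>0} (k_r^{lim+})^{λ_r} = ∏_{r : λ_r>0} (k_r^{lim−})^{λ_r}. -/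
open Filter Finset

lemma weg_aux (m : ℕ) (lam : Fin m → ℝ) (hlam : ∀ r, 0 ≤ lam r)
    (k : ℕ → Fin m → ℝ) (klim : Fin m → ℝ)
    (hlim : ∀ r, Tendsto (fun j => k j r) atTop (nhds (klim r))) :
    Tendsto (fun j => ∏ r, k j r ^ lam r) atTop
      (nhds (∏ r ∈ Finset.univ.filter (fun r => 0 < lam r), klim r ^ lam r)) := by
  have heq : ∀ j, ∏ r, k j r ^ lam r
      = ∏ r ∈ Finset.univ.filter (fun r => 0 < lam r), k j r ^ lam r := by
    intro j
    rw [← Finset.prod_filter_mul_prod_filter_not Finset.univ (fun r => 0 < lam r)]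
    have : ∏ r ∈ Finset.univ.filter (fun r => ¬ 0 < lam r), k j r ^ lam r = 1 := by
      apply Finset.prod_eq_one
      intro r hr
      simp only [Finset.mem_filter] at hr
      have : lam r = 0 := le_antisymm (not_lt.mp hr.2) (hlam r)
      rw [this, Real.rpow_zero]
    rw [this, mul_one]
  simp only [heq]
  apply tendsto_finset_prod
  intro r hr
  simp only [Finset.mem_filter] at hr
  exact Filter.Tendsto.rpow (hlim r) tendsto_const_nhds (Or.inr hr.2)

/-- What survives of a Wegscheider identity in a limit of positive rate
constants: (1) if a direct constant with positive weight vanishes, some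
reverse constant with positive weight vanishes too; (2) if all constants
with positive weight stay positive, the Wegscheider identity persists. -/
theorem wegscheider_limit
    (m : ℕ) (lam : Fin m → ℝ) (hlam : ∀ r, 0 ≤ lam r)
    (kp km : ℕ → Fin m → ℝ)
    (hkp : ∀ j r, 0 < kp j r) (hkm : ∀ j r, 0 < km j r)
    (klimp klimm : Fin m → ℝ)
    (hlimp : ∀ r, Filter.Tendsto (fun j => kp j r) Filter.atTop (nhds (klimp r)))
    (hlimm : ∀ r, Filter.Tendsto (fun j => km j r) Filter.atTop (nhds (klimm r)))
    (hW : ∀ j, ∏ r, kp j r ^ lam r = ∏ r, km j r ^ lam r) :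
    ((∃ s, 0 < lam s ∧ klimp s = 0) → ∃ q, 0 < lam q ∧ klimm q = 0) ∧
      ((∀ r, 0 < lam r → 0 < klimp r ∧ 0 < klimm r) →
        ∏ r ∈ Finset.univ.filter (fun r => 0 < lam r), klimp r ^ lam r
          = ∏ r ∈ Finset.univ.filter (fun r => 0 < lam r), klimm r ^ lam r) := by
  have hTp := weg_aux m lam hlam kp klimp hlimp
  have hTm := weg_aux m lam hlam km klimm hlimm
  have hTm' : Tendsto (fun j => ∏ r, kp j r ^ lam r) atTop
      (nhds (∏ r ∈ Finset.univ.filter (fun r => 0 < lam r), klimm r ^ lam r)) := by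
    simpa only [hW] using hTm
  have hmain : ∏ r ∈ Finset.univ.filter (fun r => 0 < lam r), klimp r ^ lam r
      = ∏ r ∈ Finset.univ.filter (fun r => 0 < lam r), klimm r ^ lam r :=
    tendsto_nhds_unique hTp hTm'
  have hmnn : ∀ r, 0 ≤ klimm r := fun r =>
    ge_of_tendsto' (hlimm r) (fun j => (hkm j r).le)
  constructor
  · rintro ⟨s, hs, hs0⟩
    by_contra h
    push_neg at h
    have hpos : ∀ r, 0 < lam r → 0 < klimm r := fun r hr =>
      (hmnn r).lt_of_ne' (h r hr)
    have hL : ∏ r ∈ Finset.univ.filter (fun r => 0 < lam r), klimp r ^ lam r = 0 := by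
      apply Finset.prod_eq_zero (Finset.mem_filter.mpr ⟨Finset.mem_univ s, hs⟩)
      rw [hs0, Real.zero_rpow hs.ne']
    have hR : 0 < ∏ r ∈ Finset.univ.filter (fun r => 0 < lam r), klimm r ^ lam r := by
      apply Finset.prod_pos
      intro r hr
      simp only [Finset.mem_filter] at hr
      exact Real.rpow_pos_of_pos (hpos r hr.2) _
    rw [hL] at hmain
    exact absurd hmain.symm hR.ne'
  · intro _
    exact hmain
end

section
/- Let γ_1, …, γ_m ∈ ℝ^n. For each j ∈ ℕ let k⁺_{r,j} > 0 and k⁻_{r,j} > 0 (r = 1,…,m) satisfy the principle of detailed balance: there exists x_j ∈ ℝ^n with ∑_{i=1}^n γ_{r i} x_{j,i} = ln k⁺_{r,j} − ln k⁻_{r,j} for all r. Suppose k⁺_{r,j} → k_r⁺ and k⁻_{r,j} → k_r⁻ as j → ∞. Then for every λ ∈ ℝ^m with λ_r ≥ 0 for all r and ∑_r λ_r γ_r = 0 the following holds: if k_r⁺ > 0 for every r with λ_r > 0, then k_r⁻ > 0 for every r with λ_r > 0, and ∏_{r : λ_r>0} (k_r⁺)^{λ_r} = ∏_{r : λ_r>0}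 (k_r⁻)^{λ_r}. -/
/-- Product of positive reals raised to real exponents equals exp of the
weighted log-sum. -/
lemma prod_rpow_eq_exp {ι : Type*} (s : Finset ι) (f lam : ι → ℝ)
    (hf : ∀ r ∈ s, 0 < f r) :
    ∏ r ∈ s, f r ^ lam r = Real.exp (∑ r ∈ s, lam r * Real.log (f r)) := by
  rw [Real.exp_sum]
  exact Finset.prod_congr rfl fun r hr => by
    rw [Real.rpow_def_of_pos (hf r hr), mul_comm]

/-- Direct part of the main theorem: a limit of reversible systems with
detailed balance satisfies the extended form of detailed balance for every
oriented cycle (structural and algebraic conditions). -/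
theorem limit_of_detailed_balance_satisfies_extended_detailed_balance
    (n m : ℕ) (γ : Fin m → Fin n → ℝ)
    (kp km : ℕ → Fin m → ℝ)
    (hkp : ∀ j r, 0 < kp j r) (hkm : ∀ j r, 0 < km j r)
    (hDB : ∀ j, ∃ x : Fin n → ℝ,
      ∀ r, ∑ i, γ r i * x i = Real.log (kp j r) - Real.log (km j r))
    (kplim kmlim : Fin m → ℝ)
    (hlimp : ∀ r, Filter.Tendsto (fun j => kp j r) Filter.atTop (nhds (kplim r)))
    (hlimm : ∀ r, Filter.Tendsto (fun j => km j r) Filter.atTop (nhds (kmlim r))) :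
    ∀ lam : Fin m → ℝ, (∀ r, 0 ≤ lam r) → (∀ i, ∑ r, lam r * γ r i = 0) →
      (∀ r, 0 < lam r → 0 < kplim r) →
      (∀ r, 0 < lam r → 0 < kmlim r) ∧
        ∏ r ∈ Finset.univ.filter (fun r => 0 < lam r), kplim r ^ lam r
          = ∏ r ∈ Finset.univ.filter (fun r => 0 < lam r), kmlim r ^ lam r := by
  intro lam hlam0 hcycle hpos
  set S : Finset (Fin m) := Finset.univ.filter (fun r => 0 < lam r) with hS
  have hmemS : ∀ r, r ∈ S ↔ 0 < lam r := by
    intro r; simp [hS]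
  -- Wegscheider identity at each j
  have hweg : ∀ j, ∑ r ∈ S, lam r * Real.log (kp j r)
      = ∑ r ∈ S, lam r * Real.log (km j r) := by
    intro j
    obtain ⟨x, hx⟩ := hDB j
    have key : ∑ r, lam r * (Real.log (kp j r) - Real.log (km j r)) = 0 := by
      have : ∑ r, lam r * (Real.log (kp j r) - Real.log (km j r))
          = ∑ r, lam r * ∑ i, γ r i * x i := by
        exact Finset.sum_congr rfl fun r _ => by rw [hx r]
      rw [this]
      have h2 : ∑ r, lam r * ∑ i, γ r i * x i
          = ∑ i, (∑ r, lam r * γ r i) * x i := by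
        simp_rw [Finset.mul_sum, Finset.sum_mul]
        rw [Finset.sum_comm]
        exact Finset.sum_congr rfl fun i _ => Finset.sum_congr rfl fun r _ => by ring
      rw [h2]
      simp [hcycle]
    have keyS : ∑ r ∈ S, lam r * (Real.log (kp j r) - Real.log (km j r)) = 0 := by
      rw [← key]
      apply Finset.sum_subset (Finset.subset_univ S)
      intro r _ hr
      have : lam r = 0 := le_antisymm (by simpa [hmemS] using hr) (hlam0 r)
      simp [this]
    have := keyS
    simp only [mul_sub, Finset.sum_sub_distrib] at this
    linarith
  -- the limit value
  set A : ℝ := ∑ r ∈ S, lam r * Real.log (kplim r) with hA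
  have hGtend : Filter.Tendsto (fun j => ∑ r ∈ S, lam r * Real.log (km j r))
      Filter.atTop (nhds A) := by
    have hFtend : Filter.Tendsto (fun j => ∑ r ∈ S, lam r * Real.log (kp j r))
        Filter.atTop (nhds A) := by
      rw [hA]
      apply tendsto_finset_sum
      intro r hr
      have hp : 0 < kplim r := hpos r ((hmemS r).mp hr)
      exact (((Real.continuousAt_log (ne_of_gt hp)).tendsto).comp (hlimp r)).const_mul _
    exact hFtend.congr fun j => hweg j
  -- products over S of km j
  have hPeq : ∀ j, ∏ r ∈ S, km j r ^ lam r
      = Real.exp (∑ r ∈ S, lam r * Real.log (km j r)) :=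
    fun j => prod_rpow_eq_exp S _ lam (fun r _ => hkm j r)
  have hPtend : Filter.Tendsto (fun j => ∏ r ∈ S, km j r ^ lam r)
      Filter.atTop (nhds (Real.exp A)) := by
    have := (Real.continuous_exp.tendsto A).comp hGtend
    exact this.congr fun j => (hPeq j).symm
  have hPtend' : Filter.Tendsto (fun j => ∏ r ∈ S, km j r ^ lam r)
      Filter.atTop (nhds (∏ r ∈ S, kmlim r ^ lam r)) := by
    apply tendsto_finset_prod
    intro r hr
    have hl : 0 < lam r := (hmemS r).mp hr
    exact ((Real.continuousAt_rpow_const _ _ (Or.inr (le_of_lt hl))).tendsto).comp (hlimm r)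
  have hQ : ∏ r ∈ S, kmlim r ^ lam r = Real.exp A :=
    tendsto_nhds_unique hPtend' hPtend
  -- structural condition
  have hstruct : ∀ r, 0 < lam r → 0 < kmlim r := by
    intro r hl
    have hge : 0 ≤ kmlim r :=
      le_of_tendsto_of_tendsto' tendsto_const_nhds (hlimm r) (fun j => (hkm j r).le)
    rcases hge.lt_or_eq with h | h
    · exact h
    · exfalso
      have hz : kmlim r ^ lam r = 0 := by
        rw [← h, Real.zero_rpow (ne_of_gt hl)]
      have : ∏ r ∈ S, kmlim r ^ lam r = 0 :=
        Finset.prod_eq_zero ((hmemS r).mpr hl) hz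
      rw [hQ] at this
      exact (Real.exp_pos A).ne' this
  refine ⟨hstruct, ?_⟩
  have hkpexp : ∏ r ∈ S, kplim r ^ lam r = Real.exp A := by
    rw [hA]
    exact prod_rpow_eq_exp S _ lam (fun r hr => hpos r ((hmemS r).mp hr))
  rw [hkpexp, hQ]
end

section
/- Let γ_1, …, γ_r, ν_1, …, ν_s ∈ ℝ^n, let k_i⁺, k_i⁻ > 0 (i = 1,…,r) and q_j > 0 (j = 1,…,s). Assume: (i) there exists x* ∈ ℝ^n with ⟨γ_i, x*⟩ = ln k_i⁺ − ln k_i⁻ for all i (detailed balance for the reversible part); (ii) the convex hull of {ν_1,…,ν_s} has empty intersection with the linear span of {γ_1,…,γ_r}; (iii) there exists b ∈ ℝ^n with b_i > 0 for all i and ⟨γ_i, b⟩ = 0 for all i, ⟨ν_j, b⟩ = 0 for all j. Then there exists a family of positive constants q_j⁻(ε) > 0, ε ∈ (0,1], such that: for each ε the fully reversible system satisfies the principle of detailed balance, i.e. there exists x(ε) ∈ ℝ^n with ⟨γ_i, x(ε)⟩ = ln k_i⁺ − ln k_i⁻ for all i and ⟨ν_j, x(ε)⟩ = ln q_j − ln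 q_j⁻(ε) for all j; and q_j⁻(ε) → 0 as ε → 0⁺ for every j. -/
/-!
The structural condition says that the convex hull of the `ν_j` misses the span of the `γ_i`, so
Hahn–Banach gives a direction `w` orthogonal to every `γ_i` with `⟨ν_j, w⟩ > 0` for all `j`.
Moving the detailed-balance solution `x*` to `x(ε) = x* - (ln ε) w` keeps the equations of the
reversible part and lets `⟨ν_j, x(ε)⟩` grow to `+∞` as `ε → 0⁺`; the reverse constants
`q_j⁻(ε) = q_j exp(-⟨ν_j, x(ε)⟩)` are then forced by the new equations and tend to `0`.
-/

open Filter Topology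

theorem LinearMap.apply_eq_zero_of_forall_mem_lt {E : Type*} [AddCommGroup E] [Module ℝ E]
    (f : E →ₗ[ℝ] ℝ) (V : Submodule ℝ E) {c : ℝ} (hc : ∀ z ∈ V, c < f z) {z : E}
    (hz : z ∈ V) : f z = 0 := by
  by_contra hfz
  have := hc ((c / f z) • z) (V.smul_mem _ hz)
  rw [map_smul, smul_eq_mul, div_mul_cancel₀ _ hfz] at this
  exact lt_irrefl c this

theorem exists_dotProduct_pos_of_disjoint_convexHull {σ ι : Type*} [Fintype σ] [Finite ι]
    (ν : ι → σ → ℝ) (V : Submodule ℝ (σ → ℝ))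
    (h : Disjoint (convexHull ℝ (Set.range ν)) V) :
    ∃ w : σ → ℝ, (∀ z ∈ V, z ⬝ᵥ w = 0) ∧ ∀ j, 0 < ν j ⬝ᵥ w := by
  classical
  obtain ⟨f, u, v, hfu, huv, hvf⟩ :=
    geometric_hahn_banach_compact_closed (convex_convexHull ℝ _)
      ((Set.finite_range ν).isCompact_convexHull ℝ) V.convex V.closed_of_finiteDimensional h
  have hf_eq_zero : ∀ z ∈ V, f z = 0 := fun z hz =>
    (f : (σ → ℝ) →ₗ[ℝ] ℝ).apply_eq_zero_of_forall_mem_lt V hvf hz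
  have hv_neg : v < 0 := by simpa using hvf 0 V.zero_mem
  have hdot : ∀ z, z ⬝ᵥ (-(dotProductEquiv ℝ σ).symm f) = -f z := fun z => by
    rw [dotProduct_neg, dotProduct_comm, ← dotProductEquiv_apply_apply,
      LinearEquiv.apply_symm_apply, ContinuousLinearMap.coe_coe]
  refine ⟨-(dotProductEquiv ℝ σ).symm f, fun z hz => ?_, fun j => ?_⟩
  · rw [hdot, hf_eq_zero z hz, neg_zero]
  · have := hfu (ν j) (subset_convexHull ℝ _ ⟨j, rfl⟩)
    rw [hdot]
    linarith

theorem tendsto_dotProduct_sub_log_smul_atTop {σ : Type*} [Fintype σ] {v w : σ → ℝ}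
    (x : σ → ℝ) (hvw : 0 < v ⬝ᵥ w) :
    Tendsto (fun ε => v ⬝ᵥ (x - Real.log ε • w)) (𝓝[>] 0) atTop := by
  have hlog := Real.tendsto_log_nhdsGT_zero.atBot_mul_const hvw
  simpa [dotProduct_sub, dotProduct_smul, sub_eq_add_neg] using
    tendsto_atTop_add_const_left _ (v ⬝ᵥ x) (tendsto_neg_atBot_atTop.comp hlog)

theorem extended_detailed_balance_is_limit_of_reversible_general
    (n r s : ℕ) (γ : Fin r → Fin n → ℝ) (ν : Fin s → Fin n → ℝ)
    (kp km : Fin r → ℝ) (q : Fin s → ℝ)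
    (hq : ∀ j, 0 < q j)
    (hDB : ∃ xs : Fin n → ℝ,
      ∀ i, ∑ t, γ i t * xs t = Real.log (kp i) - Real.log (km i))
    (hstruct : convexHull ℝ (Set.range ν) ∩
      (Submodule.span ℝ (Set.range γ) : Set (Fin n → ℝ)) = ∅) :
    ∃ qm : ℝ → Fin s → ℝ,
      (∀ ε ∈ Set.Ioc (0 : ℝ) 1, ∀ j, 0 < qm ε j) ∧
      (∀ ε ∈ Set.Ioc (0 : ℝ) 1, ∃ x : Fin n → ℝ,
        (∀ i, ∑ t, γ i t * x t = Real.log (kp i) - Real.log (km i)) ∧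
        (∀ j, ∑ t, ν j t * x t = Real.log (q j) - Real.log (qm ε j))) ∧
      (∀ j, Filter.Tendsto (fun ε => qm ε j)
        (nhdsWithin 0 (Set.Ioi 0)) (nhds 0)) := by
  obtain ⟨xs, hxs⟩ := hDB
  obtain ⟨w, hγw, hνw⟩ := exists_dotProduct_pos_of_disjoint_convexHull ν
    (Submodule.span ℝ (Set.range γ)) (Set.disjoint_iff_inter_eq_empty.mpr hstruct)
  let x : ℝ → Fin n → ℝ := fun ε => xs - Real.log ε • w
  refine ⟨fun ε j => q j * Real.exp (-(ν j ⬝ᵥ x ε)),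
    fun ε _ j => mul_pos (hq j) (Real.exp_pos _), fun ε _ => ⟨x ε, fun i => ?_, fun j => ?_⟩,
    fun j => ?_⟩
  · have hγiw := hγw (γ i) (Submodule.subset_span ⟨i, rfl⟩)
    show γ i ⬝ᵥ (xs - Real.log ε • w) = _
    rw [dotProduct_sub, dotProduct_smul, hγiw, smul_zero, sub_zero]
    exact hxs i
  · rw [Real.log_mul (hq j).ne' (Real.exp_ne_zero _), Real.log_exp, ← sub_eq_add_neg,
      sub_sub_cancel]
    rfl
  · have := (Real.tendsto_exp_neg_atTop_nhds_zero.comp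
      (tendsto_dotProduct_sub_log_smul_atTop xs (hνw j))).const_mul (q j)
    rwa [mul_zero] at this

/-- Converse part of the main theorem: a system satisfying the extended form
of detailed balance (detailed balance for the reversible part, structural
condition, and a positive conservation law) is the limit, as `ε → 0⁺`, of
fully reversible systems with detailed balance in which the constants
`q_j⁻(ε)` of the added reverse reactions tend to zero. -/
theorem extended_detailed_balance_is_limit_of_reversible
    (n r s : ℕ) (γ : Fin r → Fin n → ℝ) (ν : Fin s → Fin n → ℝ)
    (kp km : Fin r → ℝ) (q : Fin s → ℝ)
    (hkp : ∀ i, 0 < kp i) (hkm : ∀ i, 0 < km i) (hq : ∀ j, 0 < q j)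
    (hDB : ∃ xs : Fin n → ℝ,
      ∀ i, ∑ t, γ i t * xs t = Real.log (kp i) - Real.log (km i))
    (hstruct : convexHull ℝ (Set.range ν) ∩
      (Submodule.span ℝ (Set.range γ) : Set (Fin n → ℝ)) = ∅)
    (hcons : ∃ b : Fin n → ℝ, (∀ t, 0 < b t) ∧
      (∀ i, ∑ t, γ i t * b t = 0) ∧ (∀ j, ∑ t, ν j t * b t = 0)) :
    ∃ qm : ℝ → Fin s → ℝ,
      (∀ ε ∈ Set.Ioc (0 : ℝ) 1, ∀ j, 0 < qm ε j) ∧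
      (∀ ε ∈ Set.Ioc (0 : ℝ) 1, ∃ x : Fin n → ℝ,
        (∀ i, ∑ t, γ i t * x t = Real.log (kp i) - Real.log (km i)) ∧
        (∀ j, ∑ t, ν j t * x t = Real.log (q j) - Real.log (qm ε j))) ∧
      (∀ j, Filter.Tendsto (fun ε => qm ε j)
        (nhdsWithin 0 (Set.Ioi 0)) (nhds 0)) :=
  extended_detailed_balance_is_limit_of_reversible_general n r s γ ν kp km q hq hDB hstruct
end

section
/- Let γ_1, …, γ_m ∈ ℝ^n, k_r⁺ > 0 and k_r⁻ ≥ 0 for r = 1,…,m, and let Λ₊ = {λ ∈ ℝ^m : λ_r ≥ 0 for all r and ∑_r λ_r γ_r = 0}. Call a nonzero μ ∈ Λ₊ a directional vector of an extreme ray if whenever μ = λ¹ + λ² with λ¹, λ² ∈ Λ₊, both λ¹ and λ² are nonnegative scalar multiples of μ. Then the structural condition (k_r⁻ > 0 for every r with λ_r > 0) and the algebraic condition (∏_{r : λ_r>0} (k_r⁺)^{λ_r} = ∏_{r : λ_r>0} (k_r⁻)^{λ_r}) hold for every λ ∈ Λ₊ if and only if they hold for every directional vector μ of an extreme ray of Λ₊.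 -/
/-!
`Λ₊` is the intersection of the nonnegative orthant with a linear subspace, and such a cone is
generated by its extreme rays: a nonzero element of minimal support is extreme, and subtracting
from `λ ∈ Λ₊` the largest multiple of an extreme vector whose support lies in that of `λ` (the
ratio test of the simplex method) leaves an element of `Λ₊` with strictly smaller support.
Taking logarithms turns the Wegscheider identity into the linear equation
`∑ λ_r (log k_r⁺ - log k_r⁻) = 0`, so on the orthant the structural and algebraic conditions
together cut out a convex cone. If that cone contains the extreme rays, it contains all of `Λ₊`.
-/

open Finset Real

/-- Only the first summand is constrained: the paper's condition on `l₂` follows by swapping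
the summands. -/
def IsExtremeRayVector {E : Type*} [AddCommGroup E] [Module ℝ E] (C : PointedCone ℝ E) (μ : E) :
    Prop :=
  μ ∈ C ∧ μ ≠ 0 ∧ ∀ l₁ ∈ C, ∀ l₂ ∈ C, μ = l₁ + l₂ → ∃ c : ℝ, 0 ≤ c ∧ l₁ = c • μ

section

variable {ι : Type*}

def nonnegPart (V : Submodule ℝ (ι → ℝ)) : PointedCone ℝ (ι → ℝ) :=
  (V : PointedCone ℝ (ι → ℝ)) ⊓ PointedCone.positive ℝ (ι → ℝ)

lemma mem_nonnegPart {V : Submodule ℝ (ι → ℝ)} {x : ι → ℝ} :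
    x ∈ nonnegPart V ↔ x ∈ V ∧ 0 ≤ x :=
  Iff.rfl

variable [Fintype ι]

noncomputable def posSupport (x : ι → ℝ) : Finset ι := {r | 0 < x r}

lemma mem_posSupport {x : ι → ℝ} {r : ι} : r ∈ posSupport x ↔ 0 < x r := by
  simp [posSupport]

lemma posSupport_mono {x y : ι → ℝ} (h : x ≤ y) : posSupport x ⊆ posSupport y :=
  fun r hr => mem_posSupport.2 ((mem_posSupport.1 hr).trans_le (h r))

lemma posSupport_nonempty {x : ι → ℝ} (hx : 0 ≤ x) (hx0 : x ≠ 0) : (posSupport x).Nonempty := by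
  obtain ⟨r, hr⟩ := Function.ne_iff.1 hx0
  exact ⟨r, mem_posSupport.2 ((hx r).lt_of_ne' hr)⟩

lemma exists_pos_sub_smul_nonneg_posSupport_ssubset {x y : ι → ℝ} (hx : 0 ≤ x)
    (hy : 0 ≤ y) (hy0 : y ≠ 0) (hyx : posSupport y ⊆ posSupport x) :
    ∃ t : ℝ, 0 < t ∧ 0 ≤ x - t • y ∧ posSupport (x - t • y) ⊂ posSupport x := by
  obtain ⟨r₀, hr₀, hmin⟩ :=
    (posSupport y).exists_min_image (fun r => x r / y r) (posSupport_nonempty hy hy0)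
  have hyr₀ : 0 < y r₀ := mem_posSupport.1 hr₀
  have ht : 0 < x r₀ / y r₀ := div_pos (mem_posSupport.1 (hyx hr₀)) hyr₀
  have hnonneg : 0 ≤ x - (x r₀ / y r₀) • y := by
    intro r
    rcases (hy r).eq_or_lt with hyr | hyr
    · simpa [← hyr] using hx r
    · simpa using (le_div_iff₀ hyr).1 (hmin r (mem_posSupport.2 hyr))
  refine ⟨_, ht, hnonneg, ssubset_iff_of_subset ?_ |>.2 ⟨r₀, hyx hr₀, ?_⟩⟩
  · exact posSupport_mono (sub_le_self _ (smul_nonneg ht.le hy))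
  · simp [mem_posSupport, div_mul_cancel₀ _ hyr₀.ne']

variable {V : Submodule ℝ (ι → ℝ)}

lemma isExtremeRayVector_of_posSupport_minimal {μ : ι → ℝ} (hμ : μ ∈ nonnegPart V) (hμ0 : μ ≠ 0)
    (hmin : ∀ y ∈ nonnegPart V, y ≠ 0 → ¬posSupport y ⊂ posSupport μ) :
    IsExtremeRayVector (nonnegPart V) μ := by
  refine ⟨hμ, hμ0, fun l₁ hl₁ l₂ hl₂ hsum => ?_⟩
  by_cases hl₁0 : l₁ = 0
  · exact ⟨0, le_rfl, by simp [hl₁0]⟩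
  obtain ⟨hl₁V, hl₁⟩ := mem_nonnegPart.1 hl₁
  have hsupp : posSupport l₁ ⊆ posSupport μ :=
    posSupport_mono (hsum ▸ le_add_of_nonneg_right (mem_nonnegPart.1 hl₂).2)
  obtain ⟨t, ht, hnonneg, hlt⟩ :=
    exists_pos_sub_smul_nonneg_posSupport_ssubset (mem_nonnegPart.1 hμ).2 hl₁ hl₁0 hsupp
  have hμt : μ = t • l₁ := by
    by_contra hne
    exact hmin _ (mem_nonnegPart.2 ⟨V.sub_mem hμ.1 (V.smul_mem t hl₁V), hnonneg⟩)
      (sub_ne_zero.2 hne) hlt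
  exact ⟨t⁻¹, inv_nonneg.2 ht.le, by rw [hμt, smul_smul, inv_mul_cancel₀ ht.ne', one_smul]⟩

lemma exists_isExtremeRayVector_posSupport_subset {x : ι → ℝ} (hx : x ∈ nonnegPart V)
    (hx0 : x ≠ 0) :
    ∃ e, IsExtremeRayVector (nonnegPart V) e ∧ posSupport e ⊆ posSupport x := by
  obtain ⟨e, ⟨he, he0, hex⟩, hmin⟩ := (InvImage.wf posSupport wellFounded_lt).has_min
    {y | y ∈ nonnegPart V ∧ y ≠ 0 ∧ posSupport y ⊆ posSupport x} ⟨x, hx, hx0, subset_rfl⟩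
  exact ⟨e, isExtremeRayVector_of_posSupport_minimal he he0 fun y hy hy0 hlt =>
    hmin y ⟨hy, hy0, hlt.subset.trans hex⟩ hlt, hex⟩

theorem mem_hull_extremeRayVectors {x : ι → ℝ} (hx : x ∈ nonnegPart V) :
    x ∈ PointedCone.hull ℝ {e | IsExtremeRayVector (nonnegPart V) e} := by
  by_cases hx0 : x = 0
  · exact hx0 ▸ zero_mem _
  obtain ⟨e, he, hex⟩ := exists_isExtremeRayVector_posSupport_subset hx hx0
  obtain ⟨t, ht, hnonneg, hlt⟩ := exists_pos_sub_smul_nonneg_posSupport_ssubset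
    (mem_nonnegPart.1 hx).2 (mem_nonnegPart.1 he.1).2 he.2.1 hex
  have hrest : x - t • e ∈ PointedCone.hull ℝ {e | IsExtremeRayVector (nonnegPart V) e} :=
    mem_hull_extremeRayVectors
      (mem_nonnegPart.2 ⟨V.sub_mem hx.1 (V.smul_mem t (mem_nonnegPart.1 he.1).1), hnonneg⟩)
  simpa using add_mem hrest (Submodule.smul_mem _ ⟨t, ht.le⟩ (PointedCone.subset_hull he))
termination_by (posSupport x).card
decreasing_by exact card_lt_card hlt

lemma log_prod_rpow_posSupport {k w : ι → ℝ} (hw : 0 ≤ w) (hk : ∀ r, 0 < w r → 0 < k r) :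
    log (∏ r ∈ posSupport w, k r ^ w r) = ∑ r, w r * log (k r) := by
  rw [log_prod fun r hr => (rpow_pos_of_pos (hk r (mem_posSupport.1 hr)) _).ne']
  calc ∑ r ∈ posSupport w, log (k r ^ w r) = ∑ r ∈ posSupport w, w r * log (k r) :=
        sum_congr rfl fun r hr => log_rpow (hk r (mem_posSupport.1 hr)) _
    _ = ∑ r, w r * log (k r) :=
        sum_filter_of_ne fun r _ h => (hw r).lt_of_ne' (left_ne_zero_of_mul h)

noncomputable def detailedBalanceCone (kp km : ι → ℝ) : PointedCone ℝ (ι → ℝ) where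
  carrier := {w | 0 ≤ w ∧ (∀ r, 0 < w r → 0 < km r) ∧ ∑ r, w r * (log (kp r) - log (km r)) = 0}
  add_mem' := by
    rintro a b ⟨ha, has, hal⟩ ⟨hb, hbs, hbl⟩
    refine ⟨add_nonneg ha hb, fun r hr => ?_, by simp [add_mul, sum_add_distrib, hal, hbl]⟩
    by_cases har : 0 < a r
    · exact has r har
    · exact hbs r (by simp only [Pi.add_apply] at hr; linarith [not_lt.1 har])
  zero_mem' := by simp
  smul_mem' := by
    rintro ⟨c, hc⟩ a ⟨ha, has, hal⟩
    refine ⟨smul_nonneg hc ha, fun r hr => has r (pos_of_mul_pos_right hr hc), ?_⟩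
    simp [mul_assoc, ← mul_sum, hal]

lemma mem_detailedBalanceCone_iff {kp km w : ι → ℝ} (hkp : ∀ r, 0 < kp r) (hw : 0 ≤ w) :
    w ∈ detailedBalanceCone kp km ↔ (∀ r, 0 < w r → 0 < km r) ∧
      ∏ r ∈ posSupport w, kp r ^ w r = ∏ r ∈ posSupport w, km r ^ w r := by
  change 0 ≤ w ∧ _ ↔ _
  rw [and_iff_right hw]
  refine and_congr_right fun hkm => ?_
  have hprod_pos {k : ι → ℝ} (hk : ∀ r, 0 < w r → 0 < k r) :
      (∏ r ∈ posSupport w, k r ^ w r) ∈ Set.Ioi 0 :=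
    prod_pos fun r hr => rpow_pos_of_pos (hk r (mem_posSupport.1 hr)) _
  rw [← log_injOn_pos.eq_iff (hprod_pos fun r _ => hkp r) (hprod_pos hkm),
    log_prod_rpow_posSupport hw fun r _ => hkp r, log_prod_rpow_posSupport hw hkm]
  simp only [mul_sub, sum_sub_distrib, sub_eq_zero]

end

lemma mem_ker_vecMulLinear_iff {ι κ : Type*} [Fintype ι] (γ : Matrix ι κ ℝ) (x : ι → ℝ) :
    x ∈ LinearMap.ker γ.vecMulLinear ↔ ∀ i, ∑ r, x r * γ r i = 0 := by
  simp [funext_iff, Matrix.vecMul, dotProduct]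

theorem extended_detailed_balance_iff_extreme_rays_general
    (n m : ℕ) (γ : Fin m → Fin n → ℝ) (kp km : Fin m → ℝ)
    (hkp : ∀ r, 0 < kp r) :
    (∀ lam : Fin m → ℝ, (∀ r, 0 ≤ lam r) → (∀ i, ∑ r, lam r * γ r i = 0) →
        ((∀ r, 0 < lam r → 0 < km r) ∧
          ∏ r ∈ Finset.univ.filter (fun r => 0 < lam r), kp r ^ lam r
            = ∏ r ∈ Finset.univ.filter (fun r => 0 < lam r), km r ^ lam r)) ↔
      (∀ μ : Fin m → ℝ, (∀ r, 0 ≤ μ r) → (∀ i, ∑ r, μ r * γ r i = 0) → μ ≠ 0 →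
        (∀ l1 l2 : Fin m → ℝ,
          (∀ r, 0 ≤ l1 r) → (∀ i, ∑ r, l1 r * γ r i = 0) →
          (∀ r, 0 ≤ l2 r) → (∀ i, ∑ r, l2 r * γ r i = 0) →
          μ = l1 + l2 →
          (∃ c : ℝ, 0 ≤ c ∧ l1 = c • μ) ∧ (∃ c : ℝ, 0 ≤ c ∧ l2 = c • μ)) →
        ((∀ r, 0 < μ r → 0 < km r) ∧
          ∏ r ∈ Finset.univ.filter (fun r => 0 < μ r), kp r ^ μ r
            = ∏ r ∈ Finset.univ.filter (fun r => 0 < μ r), km r ^ μ r)) := by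
  set Λ := nonnegPart (LinearMap.ker (Matrix.vecMulLinear γ))
  have mem_Λ (x : Fin m → ℝ) : x ∈ Λ ↔ (∀ i, ∑ r, x r * γ r i = 0) ∧ 0 ≤ x :=
    and_congr_left' (mem_ker_vecMulLinear_iff γ x)
  refine ⟨fun h μ hμ hμγ _ _ => h μ hμ hμγ, fun h lam hlam hlamγ => ?_⟩
  have hrays : {e | IsExtremeRayVector Λ e} ⊆ detailedBalanceCone kp km := by
    rintro e ⟨he, he0, hext⟩
    obtain ⟨heγ, he⟩ := (mem_Λ e).1 he
    refine (mem_detailedBalanceCone_iff hkp he).2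
      (h e he heγ he0 fun l₁ l₂ h₁ h₁γ h₂ h₂γ hsum => ?_)
    have hl₁ : l₁ ∈ Λ := (mem_Λ _).2 ⟨h₁γ, h₁⟩
    have hl₂ : l₂ ∈ Λ := (mem_Λ _).2 ⟨h₂γ, h₂⟩
    exact ⟨hext l₁ hl₁ l₂ hl₂ hsum, hext l₂ hl₂ l₁ hl₁ (hsum.trans (add_comm _ _))⟩
  exact (mem_detailedBalanceCone_iff hkp hlam).1
    (Submodule.span_le.2 hrays (mem_hull_extremeRayVectors ((mem_Λ lam).2 ⟨hlamγ, hlam⟩)))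

/-- The extended form of detailed balance (structural + algebraic conditions
for all oriented cycles in the cone `Λ₊`) holds iff it holds for the
directional vectors of the extreme rays of `Λ₊`. -/
theorem extended_detailed_balance_iff_extreme_rays
    (n m : ℕ) (γ : Fin m → Fin n → ℝ) (kp km : Fin m → ℝ)
    (hkp : ∀ r, 0 < kp r) (hkm : ∀ r, 0 ≤ km r) :
    (∀ lam : Fin m → ℝ, (∀ r, 0 ≤ lam r) → (∀ i, ∑ r, lam r * γ r i = 0) →
        ((∀ r, 0 < lam r → 0 < km r) ∧
          ∏ r ∈ Finset.univ.filter (fun r => 0 < lam r), kp r ^ lam r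
            = ∏ r ∈ Finset.univ.filter (fun r => 0 < lam r), km r ^ lam r)) ↔
      (∀ μ : Fin m → ℝ, (∀ r, 0 ≤ μ r) → (∀ i, ∑ r, μ r * γ r i = 0) → μ ≠ 0 →
        (∀ l1 l2 : Fin m → ℝ,
          (∀ r, 0 ≤ l1 r) → (∀ i, ∑ r, l1 r * γ r i = 0) →
          (∀ r, 0 ≤ l2 r) → (∀ i, ∑ r, l2 r * γ r i = 0) →
          μ = l1 + l2 →
          (∃ c : ℝ, 0 ≤ c ∧ l1 = c • μ) ∧ (∃ c : ℝ, 0 ≤ c ∧ l2 = c • μ)) →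
        ((∀ r, 0 < μ r → 0 < km r) ∧
          ∏ r ∈ Finset.univ.filter (fun r => 0 < μ r), kp r ^ μ r
            = ∏ r ∈ Finset.univ.filter (fun r => 0 < μ r), km r ^ μ r)) :=
  extended_detailed_balance_iff_extreme_rays_general n m γ kp km hkp
end

section
/- Let k : Fin n → Fin n → ℝ with k i j ≥ 0 for i ≠ j (k i j is the rate constant of A_j → A_i). The following are equivalent: (A) there exist sequences k^{(m)} i j > 0 (m ∈ ℕ, i ≠ j) with k^{(m)} i j → k i j as m → ∞ such that for every m there exists p^{(m)} ∈ ℝ^n with p^{(m)}_i > 0 for all i and k^{(m)} i j * p^{(m)}_j = k^{(m)} j i * p^{(m)}_i for all i ≠ j; (B) for every oriented cycle, i.e. every finite sequence of indices i_1, …, i_q (with the cyclic convention i_{q+1} = i_1) such that k i_{j+1} i_j > 0 for all j = 1,…,q, one has k i_j i_{j+1} > 0 for all j and ∏_{j=1}^q k i_{j+1} i_j = ∏_{j=1}^q k i_j i_{j+1}. -/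
/-!
(A) ⇒ (B): along a cycle the equilibrium weights telescope, so every system with detailed
balance satisfies the Wegscheider identity on every cycle, and the identity passes to the limit.
Since off-diagonal rates are nonnegative, equality with the positive forward product forces the
reverse rates of a positive cycle to be positive.

(B) ⇒ (A): the Wegscheider identity makes the product of forward over backward rate constants
along a walk depend only on its endpoints within a strongly connected component of the transition
graph, which gives weights `w` balancing all reversible pairs. Irreversible transitions strictly
decrease the number `h` of reachable states. With `p = w ε ^ h`, keep the positive constants, give
each missing reverse rate its balancing value, of order `ε ^ (h a - h b) → 0`, and give each absent
pair the rates `ε p a`, `ε p b`.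
-/

open Filter Topology Relation

namespace DetailedBalance

variable {ι : Type*} {k : ι → ι → ℝ}

section Cycles

variable {J : Type*} [Fintype J]

theorem prod_cycle_eq_of_detailedBalance {K : Type*} [CommGroupWithZero K]
    {r : ι → ι → K} {p : ι → K} (hp : ∀ i, p i ≠ 0) (hdb : ∀ i j, r i j * p j = r j i * p i)
    (σ : Equiv.Perm J) (idx : J → ι) :
    ∏ j, r (idx (σ j)) (idx j) = ∏ j, r (idx j) (idx (σ j)) := by
  have hshift : ∏ j, p (idx (σ j)) = ∏ j, p (idx j) := Equiv.prod_comp σ (p ∘ idx)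
  have hflux : ∏ j, r (idx (σ j)) (idx j) * p (idx j) =
      ∏ j, r (idx j) (idx (σ j)) * p (idx (σ j)) :=
    Fintype.prod_congr _ _ fun j => hdb _ _
  rw [Finset.prod_mul_distrib, Finset.prod_mul_distrib, hshift] at hflux
  exact mul_right_cancel₀ (Finset.prod_ne_zero_iff.mpr fun j _ => hp _) hflux

theorem prod_cycle_eq_of_tendsto_detailedBalance {α : Type*} {l : Filter α} [l.NeBot]
    {ks : α → ι → ι → ℝ}
    (hlim : ∀ i j, i ≠ j → Tendsto (fun m => ks m i j) l (𝓝 (k i j)))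
    (hdb : ∀ m, ∃ p : ι → ℝ, (∀ i, 0 < p i) ∧ ∀ i j, i ≠ j → ks m i j * p j = ks m j i * p i)
    (σ : Equiv.Perm J) (idx : J → ι) :
    ∏ j, k (idx (σ j)) (idx j) = ∏ j, k (idx j) (idx (σ j)) := by
  classical
  -- (A) says nothing about the diagonal of `ks`; taking that of `k` makes every entry converge
  let ks' : α → ι → ι → ℝ := fun m i j => if i = j then k i j else ks m i j
  have hlim' : ∀ i j, Tendsto (fun m => ks' m i j) l (𝓝 (k i j)) := fun i j => by
    by_cases hij : i = j
    · simp only [ks', if_pos hij, tendsto_const_nhds]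
    · simpa only [ks', if_neg hij] using hlim i j hij
  have hcycle : ∀ m, ∏ j, ks' m (idx (σ j)) (idx j) = ∏ j, ks' m (idx j) (idx (σ j)) := by
    intro m
    obtain ⟨p, hp, hdbp⟩ := hdb m
    refine prod_cycle_eq_of_detailedBalance (fun i => (hp i).ne') (fun i j => ?_) σ idx
    by_cases hij : i = j
    · subst hij; rfl
    · simp only [ks', if_neg hij, if_neg (Ne.symm hij), hdbp i j hij]
  exact tendsto_nhds_unique
    ((tendsto_finsetProd _ fun j _ => hlim' _ _).congr hcycle)
    (tendsto_finsetProd _ fun j _ => hlim' _ _)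

theorem reverse_pos_of_prod_cycle_eq (hk : ∀ i j, i ≠ j → 0 ≤ k i j)
    {σ : Equiv.Perm J} {idx : J → ι} (hfwd : ∀ j, 0 < k (idx (σ j)) (idx j))
    (heq : ∏ j, k (idx (σ j)) (idx j) = ∏ j, k (idx j) (idx (σ j))) (j : J) :
    0 < k (idx j) (idx (σ j)) := by
  have hne : k (idx j) (idx (σ j)) ≠ 0 :=
    Finset.prod_ne_zero_iff.mp (heq ▸ (Finset.prod_pos fun j _ => hfwd j).ne') j
      (Finset.mem_univ j)
  by_cases hj : idx j = idx (σ j)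
  · simpa only [hj] using hfwd j
  · exact (hk _ _ hj).lt_of_ne' hne

end Cycles

def Transition (k : ι → ι → ℝ) (a b : ι) : Prop := 0 < k b a

def WegscheiderCondition (k : ι → ι → ℝ) : Prop :=
  ∀ q (idx : Fin (q + 1) → ι), (∀ j, 0 < k (idx (j + 1)) (idx j)) →
    ∏ j, k (idx (j + 1)) (idx j) = ∏ j, k (idx j) (idx (j + 1))

/-- `RatioWalk k a b r`: some walk of transitions leads from `a` to `b` and the product of
its forward over its backward rate constants is `r`, which is what an equilibrium with detailed
balance must have for `p b / p a`. -/
inductive RatioWalk (k : ι → ι → ℝ) (a : ι) : ι → ℝ → Prop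
  | refl : RatioWalk k a a 1
  | tail {b c : ι} {r : ℝ} : RatioWalk k a b r → Transition k b c →
      RatioWalk k a c (r * (k c b / k b c))

namespace RatioWalk

variable {a b c : ι} {r s : ℝ}

theorem trans (h₁ : RatioWalk k a b r) (h₂ : RatioWalk k b c s) : RatioWalk k a c (r * s) := by
  induction h₂ with
  | refl => simpa only [mul_one] using h₁
  | tail _ hbc ih => simpa only [mul_assoc] using ih.tail hbc

theorem reflTransGen (h : RatioWalk k a b r) : ReflTransGen (Transition k) a b := by
  induction h with
  | refl => exact .refl
  | tail _ hbc ih => exact ih.tail hbc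

theorem exists_of_reflTransGen (h : ReflTransGen (Transition k) a b) : ∃ r, RatioWalk k a b r := by
  induction h with
  | refl => exact ⟨1, refl⟩
  | tail _ hbc ih => exact ih.elim fun r hr => ⟨_, hr.tail hbc⟩

theorem exists_fin_walk (h : RatioWalk k a b r) :
    ∃ (q : ℕ) (γ : Fin (q + 1) → ι), γ 0 = a ∧ γ (Fin.last q) = b ∧
      (∀ i : Fin q, 0 < k (γ i.succ) (γ i.castSucc)) ∧
      r = ∏ i : Fin q, k (γ i.succ) (γ i.castSucc) / k (γ i.castSucc) (γ i.succ) := by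
  induction h with
  | refl => exact ⟨0, fun _ => a, rfl, rfl, Fin.elim0, by simp⟩
  | @tail b c r _ hbc ih =>
    obtain ⟨q, γ, h0, hlast, hstep, rfl⟩ := ih
    refine ⟨q + 1, Fin.snoc γ c, ?_, Fin.snoc_last _ _, fun i => ?_, ?_⟩
    · simpa only [← Fin.castSucc_zero, Fin.snoc_castSucc] using h0
    · induction i using Fin.lastCases with
      | last =>
        simp only [Fin.succ_last, Fin.snoc_last, Fin.snoc_castSucc, hlast]
        exact hbc
      | cast i => simpa only [Fin.succ_castSucc, Fin.snoc_castSucc] using hstep i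
    · rw [Fin.prod_univ_castSucc]
      simp only [Fin.succ_castSucc, Fin.succ_last, Fin.snoc_castSucc, Fin.snoc_last, hlast]

theorem eq_one_of_closed (hW : WegscheiderCondition k) (h : RatioWalk k a a r) : r = 1 := by
  obtain ⟨q, γ, h0, hlast, hstep, rfl⟩ := h.exists_fin_walk
  have hcycle :
      ∏ i : Fin q, k (γ i.succ) (γ i.castSucc) = ∏ i : Fin q, k (γ i.castSucc) (γ i.succ) := by
    cases q with
    | zero => simp only [Finset.univ_eq_empty, Finset.prod_empty]
    | succ q =>
      have hidx : ∀ j : Fin (q + 1), γ (j + 1).castSucc = γ j.succ := fun j => by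
        induction j using Fin.lastCases with
        | last => rw [Fin.last_add_one, Fin.castSucc_zero, h0, Fin.succ_last, hlast]
        | cast j => rw [Fin.coeSucc_eq_succ, Fin.succ_castSucc]
      simpa only [hidx] using
        hW q (fun j => γ j.castSucc) fun j => by simpa only [hidx] using hstep j
  rw [Finset.prod_div_distrib, hcycle, div_self]
  exact (hcycle ▸ Finset.prod_pos fun i _ => hstep i).ne'

theorem eq_of_reflTransGen (hW : WegscheiderCondition k) (h₁ : RatioWalk k a b r)
    (h₂ : RatioWalk k a b s) (hba : ReflTransGen (Transition k) b a) : r = s := by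
  obtain ⟨t, ht⟩ := exists_of_reflTransGen hba
  have hr := (h₁.trans ht).eq_one_of_closed hW
  have hs := (h₂.trans ht).eq_one_of_closed hW
  exact mul_right_cancel₀ (right_ne_zero_of_mul_eq_one hr) (hr.trans hs.symm)

end RatioWalk

theorem Transition.reverse (hk : ∀ i j, i ≠ j → 0 ≤ k i j) (hW : WegscheiderCondition k)
    {a b : ι} (hab : Transition k a b) (hba : ReflTransGen (Transition k) b a) :
    Transition k b a := by
  obtain ⟨r, hr⟩ := RatioWalk.exists_of_reflTransGen hba
  -- `x / 0 = 0`, so a vanishing reverse rate would give the closed walk the ratio `0`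
  have hclosed : r * (k b a / k a b) = 1 := (hr.tail hab).eq_one_of_closed hW
  have hne : k a b ≠ 0 := fun h0 => by simp [h0] at hclosed
  by_cases heq : a = b
  · subst heq; exact hab
  · exact (hk a b heq).lt_of_ne' hne

theorem RatioWalk.pos (hk : ∀ i j, i ≠ j → 0 ≤ k i j) (hW : WegscheiderCondition k)
    {a b : ι} {r : ℝ} (h : RatioWalk k a b r) (hba : ReflTransGen (Transition k) b a) : 0 < r := by
  induction h with
  | refl => exact one_pos
  | @tail b c r hab hbc ih =>
    have hcb : Transition k c b := hbc.reverse hk hW (hba.trans hab.reflTransGen)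
    exact mul_pos (ih (hba.head hbc)) (div_pos hbc hcb)

def strongComponentSetoid (k : ι → ι → ℝ) : Setoid ι where
  r a b := ReflTransGen (Transition k) a b ∧ ReflTransGen (Transition k) b a
  iseqv := ⟨fun _ => ⟨.refl, .refl⟩, And.symm, fun h₁ h₂ => ⟨h₁.1.trans h₂.1, h₂.2.trans h₁.2⟩⟩

theorem exists_equilibrium_of_wegscheider (hk : ∀ i j, i ≠ j → 0 ≤ k i j)
    (hW : WegscheiderCondition k) :
    ∃ w : ι → ℝ, (∀ i, 0 < w i) ∧ ∀ i j, 0 < k i j → 0 < k j i → k i j * w j = k j i * w i := by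
  let s := strongComponentSetoid k
  let root : ι → ι := fun i => (⟦i⟧ : Quotient s).out
  have hroot : ∀ i, s (root i) i := fun i => Quotient.mk_out i
  choose w hw using fun i => RatioWalk.exists_of_reflTransGen (hroot i).1
  refine ⟨w, fun i => (hw i).pos hk hW (hroot i).2, fun i j hij hji => ?_⟩
  have hsame : root i = root j := congrArg Quotient.out (Quotient.sound ⟨.single hji, .single hij⟩)
  have hwalk : RatioWalk k (root i) i (w j * (k i j / k j i)) := hsame ▸ (hw j).tail hij
  have := (hw i).eq_of_reflTransGen hW hwalk (hroot i).2
  rw [this]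
  field_simp

section Finite

variable [Finite ι]

noncomputable def numReachable (k : ι → ι → ℝ) (i : ι) : ℕ :=
  {x | ReflTransGen (Transition k) i x}.ncard

theorem numReachable_le {i j : ι} (hji : Transition k j i) : numReachable k i ≤ numReachable k j :=
  Set.ncard_le_ncard fun _ hx => ReflTransGen.head hji hx

theorem numReachable_lt (hk : ∀ i j, i ≠ j → 0 ≤ k i j) (hW : WegscheiderCondition k) {i j : ι}
    (hji : Transition k j i) (hij : ¬Transition k i j) : numReachable k i < numReachable k j := by
  refine Set.ncard_lt_ncard ((Set.ssubset_iff_of_subset fun _ hx => hx.head hji).mpr ?_)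
  exact ⟨j, ReflTransGen.refl, fun hreach => hij (hji.reverse hk hW hreach)⟩

end Finite

section Perturbation

noncomputable def perturbedRate (k : ι → ι → ℝ) (p : ι → ℝ) (ε : ℝ) (a b : ι) : ℝ :=
  if 0 < k a b then k a b else if 0 < k b a then k b a * p a / p b else ε * p a

variable {p : ι → ℝ} {ε : ℝ}

theorem perturbedRate_pos (hp : ∀ i, 0 < p i) (hε : 0 < ε) (a b : ι) :
    0 < perturbedRate k p ε a b := by
  unfold perturbedRate
  split_ifs with hab hba
  exacts [hab, div_pos (mul_pos hba (hp a)) (hp b), mul_pos hε (hp a)]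

theorem perturbedRate_detailedBalance (hp : ∀ i, 0 < p i)
    (hbal : ∀ i j, 0 < k i j → 0 < k j i → k i j * p j = k j i * p i) (a b : ι) :
    perturbedRate k p ε a b * p b = perturbedRate k p ε b a * p a := by
  have := (hp a).ne'
  have := (hp b).ne'
  unfold perturbedRate
  split_ifs <;> first | exact hbal a b ‹_› ‹_› | field_simp

theorem tendsto_perturbedRate (hk : ∀ i j, i ≠ j → 0 ≤ k i j)
    {w : ι → ℝ} {h : ι → ℕ} (hirr : ∀ i j, 0 < k i j → k j i = 0 → h i < h j) {a b : ι}
    (hab : a ≠ b) :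
    Tendsto (fun ε => perturbedRate k (fun i => w i * ε ^ h i) ε a b) (𝓝[>] 0) (𝓝 (k a b)) := by
  unfold perturbedRate
  by_cases hpos : 0 < k a b
  · simpa only [if_pos hpos] using tendsto_const_nhds
  have hzero : k a b = 0 := le_antisymm (not_lt.mp hpos) (hk a b hab)
  simp only [if_neg hpos]
  rw [hzero]
  by_cases hrev : 0 < k b a
  · simp only [if_pos hrev]
    have hlt := hirr b a hrev hzero
    have hcongr : (fun ε : ℝ => k b a * w a / w b * ε ^ (h a - h b)) =ᶠ[𝓝[>] 0]
        fun ε => k b a * (w a * ε ^ h a) / (w b * ε ^ h b) := by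
      filter_upwards [self_mem_nhdsWithin] with ε (hε : 0 < ε)
      rw [pow_sub₀ _ hε.ne' hlt.le]
      field_simp
    refine Tendsto.congr' hcongr (tendsto_nhdsWithin_of_tendsto_nhds ?_)
    have hcont : Continuous fun ε : ℝ => k b a * w a / w b * ε ^ (h a - h b) := by fun_prop
    simpa [zero_pow (Nat.sub_ne_zero_of_lt hlt)] using hcont.tendsto 0
  · simp only [if_neg hrev]
    refine tendsto_nhdsWithin_of_tendsto_nhds ?_
    have hcont : Continuous fun ε : ℝ => ε * (w a * ε ^ h a) := by fun_prop
    simpa using hcont.tendsto 0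

theorem exists_tendsto_detailedBalance (hk : ∀ i j, i ≠ j → 0 ≤ k i j) {w : ι → ℝ}
    (hw : ∀ i, 0 < w i) {h : ι → ℕ}
    (hbal : ∀ i j, 0 < k i j → 0 < k j i → h i = h j ∧ k i j * w j = k j i * w i)
    (hirr : ∀ i j, 0 < k i j → k j i = 0 → h i < h j) :
    ∃ ks : ℕ → ι → ι → ℝ, (∀ m i j, 0 < ks m i j) ∧
      (∀ i j, i ≠ j → Tendsto (fun m => ks m i j) atTop (𝓝 (k i j))) ∧
      ∀ m, ∃ p : ι → ℝ, (∀ i, 0 < p i) ∧ ∀ i j, ks m i j * p j = ks m j i * p i := by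
  let ε : ℕ → ℝ := fun m => 1 / (m + 1)
  have hε : ∀ m, 0 < ε m := fun m => by positivity
  have hε0 : Tendsto ε atTop (𝓝[>] 0) :=
    tendsto_nhdsWithin_iff.mpr ⟨tendsto_one_div_add_atTop_nhds_zero_nat, .of_forall hε⟩
  let p : ℕ → ι → ℝ := fun m i => w i * ε m ^ h i
  have hp : ∀ m i, 0 < p m i := fun m i => mul_pos (hw i) (pow_pos (hε m) _)
  have hbalp : ∀ m i j, 0 < k i j → 0 < k j i → k i j * p m j = k j i * p m i := by
    intro m i j hij hji
    obtain ⟨hh, hwij⟩ := hbal i j hij hji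
    simp only [p, hh]
    linear_combination ε m ^ h j * hwij
  refine ⟨fun m => perturbedRate k (p m) (ε m), fun m => perturbedRate_pos (hp m) (hε m),
    fun i j hij => (tendsto_perturbedRate hk hirr hij).comp hε0,
    fun m => ⟨p m, hp m, perturbedRate_detailedBalance (hp m) (hbalp m)⟩⟩

end Perturbation

end DetailedBalance

open DetailedBalance in
/-- A linear kinetic system is a limit of reversible systems with positive
equilibria and detailed balance iff it satisfies the extended form of
detailed balance: every oriented cycle with positive constants is reversible
and satisfies the Wegscheider identity. -/
theorem linear_limit_of_detailed_balance_iff_extended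
    (n : ℕ) (k : Fin n → Fin n → ℝ) (hk : ∀ i j : Fin n, i ≠ j → 0 ≤ k i j) :
    (∃ ks : ℕ → Fin n → Fin n → ℝ,
        (∀ m : ℕ, ∀ i j : Fin n, i ≠ j → 0 < ks m i j) ∧
        (∀ i j : Fin n, i ≠ j →
          Filter.Tendsto (fun m => ks m i j) Filter.atTop (nhds (k i j))) ∧
        (∀ m : ℕ, ∃ p : Fin n → ℝ, (∀ i, 0 < p i) ∧
          ∀ i j : Fin n, i ≠ j → ks m i j * p j = ks m j i * p i)) ↔
      (∀ q : ℕ, ∀ idx : Fin (q + 1) → Fin n,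
        (∀ j : Fin (q + 1), 0 < k (idx (j + 1)) (idx j)) →
        (∀ j : Fin (q + 1), 0 < k (idx j) (idx (j + 1))) ∧
          ∏ j : Fin (q + 1), k (idx (j + 1)) (idx j)
            = ∏ j : Fin (q + 1), k (idx j) (idx (j + 1))) := by
  constructor
  · rintro ⟨ks, -, hlim, hdb⟩ q idx hfwd
    have hcycle := prod_cycle_eq_of_tendsto_detailedBalance hlim hdb (Equiv.addRight 1) idx
    exact ⟨reverse_pos_of_prod_cycle_eq hk hfwd hcycle, hcycle⟩
  · intro hB
    have hW : WegscheiderCondition k := fun q idx hfwd => (hB q idx hfwd).2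
    obtain ⟨w, hw, hbal⟩ := exists_equilibrium_of_wegscheider hk hW
    obtain ⟨ks, hpos, hlim, hdb⟩ := exists_tendsto_detailedBalance hk hw
      (fun i j hij hji => ⟨(numReachable_le hij).antisymm (numReachable_le hji), hbal i j hij hji⟩)
      (fun i j hij hji => numReachable_lt hk hW hij hji.not_gt)
    exact ⟨ks, fun m i j _ => hpos m i j, hlim, fun m => (hdb m).imp fun p hp =>
      ⟨hp.1, fun i j _ => hp.2 i j⟩⟩
end
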